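/- Let g be a Lie algebra with invariant t ∈ (S²g)^g and let c ⊂ g be a coisotropic Lie subalgebra with corresponding element t̄ = 0 in S²(g/c). Let M be a g-module and A a commutative algebra with g-action by derivations whose 'stabilizer condition' holds in the following algebraic form: for every algebra character (point evaluation) χ : A → k, the set of ξ ∈ g acting at χ by zero (i.e., χ(ξ·a) = 0 for all a) is a coisotropic subalgebra. Then m ∘ (t ·) = 0 on A ⊗ A, i.e., A is quasi-Poisson-commutative. -/

import Mathlib

open TensorProduct

variable {k : Type*} [Field k] {g : Type*} [LieRing g] [LieAlgebra k g]
variable {A : Type*} [CommRing A] [Algebra k A]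

/-- The action of an element of `g ⊗ g` on `A ⊗ A` via the two tensor legs. -/
noncomputable def twoLeg (ρ : g →ₗ[k] Module.End k A) :
    g ⊗[k] g →ₗ[k] Module.End k (A ⊗[k] A) :=
  TensorProduct.lift (((TensorProduct.mapBilinear (RingHom.id k) A A A A).comp ρ).compl₂ ρ)

/-- The stabilizer subspace `s_χ = {ξ ∈ g : χ(ξ·a) = 0 for all a}` of a character
(point evaluation) `χ : A → k`. -/
noncomputable def stabilizer (ρ : g →ₗ[k] Module.End k A) (χ : A →ₐ[k] k) :
    Submodule k g where
  carrier := {ξ | ∀ a : A, χ (ρ ξ a) = 0}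
  add_mem' := by
    intro x y hx hy a
    simp [map_add, LinearMap.add_apply, hx a, hy a]
  zero_mem' := by
    intro a
    simp
  smul_mem' := by
    intro c x hx a
    simp [map_smul, LinearMap.smul_apply, hx a]

/-!
Fix `a b : A` and a character `χ`. Then `χ (m (t·(a ⊗ b)))` is the value at `t` of the linear
form `ξ ⊗ η ↦ χ(ξ·a) χ(η·b)` on `g ⊗ g`, and this form vanishes on `s_χ ⊗ g` and on `g ⊗ s_χ`
by the very definition of `s_χ`; coisotropy therefore kills it at `t`. So `m (t·(a ⊗ b))` lies
in the kernel of every character, and in a reduced finitely generated algebra over an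
algebraically closed field that kernel intersection is zero (Hilbert's Nullstellensatz).
-/

section Nullstellensatz

variable [IsAlgClosed k] [Algebra.FiniteType k A]

theorem exists_algHom_ker_eq_of_isMaximal (m : Ideal A) [m.IsMaximal] :
    ∃ χ : A →ₐ[k] k, RingHom.ker χ = m := by
  let : Field (A ⧸ m) := Ideal.Quotient.field m
  have : Algebra.FiniteType k (A ⧸ m) :=
    .of_surjective (Ideal.Quotient.mkₐ k m) (Ideal.Quotient.mkₐ_surjective k m)
  have : Module.Finite k (A ⧸ m) := finite_of_finite_type_of_isJacobsonRing k _
  let e : k ≃ₐ[k] A ⧸ m :=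
    .ofBijective (Algebra.ofId k (A ⧸ m)) IsAlgClosed.algebraMap_bijective_of_isIntegral
  refine ⟨e.symm.toAlgHom.comp (Ideal.Quotient.mkₐ k m), ?_⟩
  ext x
  simp [Ideal.Quotient.eq_zero_iff_mem]

theorem eq_zero_of_forall_algHom_apply_eq_zero [IsReduced A] {x : A}
    (h : ∀ χ : A →ₐ[k] k, χ x = 0) : x = 0 := by
  have : IsJacobsonRing A := isJacobsonRing_of_finiteType (A := k)
  have hx : x ∈ (⊥ : Ideal A).jacobson := by
    refine Ideal.mem_sInf.mpr fun m ⟨_, hm⟩ => ?_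
    obtain ⟨χ, hχ⟩ := exists_algHom_ker_eq_of_isMaximal (k := k) m
    exact hχ ▸ h χ
  rwa [← Ideal.radical_eq_jacobson, Ideal.radical_bot_of_isReduced, Ideal.mem_bot] at hx

end Nullstellensatz

section EvalPairing

variable (ρ : g →ₗ[k] Module.End k A) (χ : A →ₐ[k] k) (a b : A)

noncomputable def evalPairing : g ⊗[k] g →ₗ[k] k :=
  LinearMap.mul' k k ∘ₗ TensorProduct.map (χ.toLinearMap ∘ₗ ρ.flip a) (χ.toLinearMap ∘ₗ ρ.flip b)

@[simp]
theorem evalPairing_tmul (ξ η : g) :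
    evalPairing ρ χ a b (ξ ⊗ₜ η) = χ (ρ ξ a) * χ (ρ η b) :=
  rfl

theorem algHom_mul'_twoLeg_tmul (s : g ⊗[k] g) :
    χ (LinearMap.mul' k A (twoLeg ρ s (a ⊗ₜ b))) = evalPairing ρ χ a b s := by
  induction s using TensorProduct.induction_on with
  | zero => simp
  | tmul ξ η => simp [twoLeg]
  | add s s' hs hs' => simp only [map_add, LinearMap.add_apply, hs, hs']

theorem evalPairing_eq_zero_of_mem_sup_range {s : g ⊗[k] g}
    (hs : s ∈ LinearMap.range (TensorProduct.map (stabilizer ρ χ).subtype LinearMap.id)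
      ⊔ LinearMap.range (TensorProduct.map LinearMap.id (stabilizer ρ χ).subtype)) :
    evalPairing ρ χ a b s = 0 := by
  refine (sup_le ?_ ?_ : _ ≤ LinearMap.ker (evalPairing ρ χ a b)) hs <;>
    refine LinearMap.range_le_ker_iff.mpr (TensorProduct.ext' ?_)
  · rintro ⟨ξ, hξ⟩ η
    simp [hξ a]
  · rintro ξ ⟨η, hη⟩
    simp [hη b]

end EvalPairing

theorem statement_18_general [IsAlgClosed k] [Algebra.FiniteType k A] [IsReduced A]
    (ρ : g →ₗ[k] Module.End k A)
    (t : g ⊗[k] g)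
    (hstab : ∀ χ : A →ₐ[k] k,
      t ∈ LinearMap.range
            (TensorProduct.map (stabilizer ρ χ).subtype (LinearMap.id : g →ₗ[k] g))
          ⊔ LinearMap.range
            (TensorProduct.map (LinearMap.id : g →ₗ[k] g) (stabilizer ρ χ).subtype)) :
    (LinearMap.mul' k A) ∘ₗ twoLeg ρ t = 0 := by
  refine TensorProduct.ext' fun a b => eq_zero_of_forall_algHom_apply_eq_zero (k := k) fun χ => ?_
  rw [LinearMap.comp_apply, algHom_mul'_twoLeg_tmul]
  exact evalPairing_eq_zero_of_mem_sup_range ρ χ a b (hstab χ)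

/-- let `A` be a reduced finitely generated commutative algebra over an
algebraically closed field `k` of characteristic `0`, acted on by `g` by derivations,
such that for every character `χ : A → k` the stabilizer `s_χ` is coisotropic, in the
algebraic form `t ∈ s_χ ⊗ g + g ⊗ s_χ`.  Then `m ∘ (t·) = 0` on `A ⊗ A`, i.e. `A` is
quasi-Poisson-commutative. -/
theorem statement_18 [CharZero k] [IsAlgClosed k] [Algebra.FiniteType k A] [IsReduced A]
    (ρ : g →ₗ[k] Module.End k A)
    (hder : ∀ (x : g) (a b : A), ρ x (a * b) = ρ x a * b + a * ρ x b)
    (hlie : ∀ x y : g, ρ ⁅x, y⁆ = ρ x * ρ y - ρ y * ρ x)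
    (t : g ⊗[k] g)
    (hsymm : TensorProduct.comm k g g t = t)
    (hinv : ∀ x : g, ⁅x, t⁆ = 0)
    (hstab : ∀ χ : A →ₐ[k] k,
      t ∈ LinearMap.range
            (TensorProduct.map (stabilizer ρ χ).subtype (LinearMap.id : g →ₗ[k] g))
          ⊔ LinearMap.range
            (TensorProduct.map (LinearMap.id : g →ₗ[k] g) (stabilizer ρ χ).subtype)) :
    (LinearMap.mul' k A) ∘ₗ twoLeg ρ t = 0 :=
  statement_18_general ρ t hstab
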